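/- arXiv:1812.06267 — 2 statements merged into one kernel-verified Lean document; each statement's English description precedes it below -/
import Mathlib

section
/- Let n = a_1 · a_2 · ... · a_k with k ≥ 2, where the positive integers a_1, ..., a_k are pairwise coprime. Then a_1^{φ(n/a_1)} + a_2^{φ(n/a_2)} + ... + a_k^{φ(n/a_k)} ≡ k − 1 (mod n). -/
/-!
Since `n` is the product of the pairwise coprime `a j`, it suffices to check the congruence
modulo each `a j`. There the term `a j ^ φ(n / a j)` vanishes, while for `i ≠ j` the factor `a j`
divides `n / a i`, so `φ (a j) ∣ φ (n / a i)` and Euler's theorem makes `a i ^ φ(n / a i) ≡ 1`.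
The sum is therefore `≡ k - 1` modulo every `a j`.
-/

open Finset Function

namespace Nat

variable {ι : Type*} [Fintype ι]

theorem modEq_prod_of_forall_modEq {a : ι → ℕ} (hcop : Pairwise (Coprime on a)) {x y : ℕ}
    (h : ∀ i, x ≡ y [MOD a i]) : x ≡ y [MOD ∏ i, a i] := by
  rw [modEq_iff_dvd, cast_prod]
  exact Fintype.prod_dvd_of_coprime (fun i j hij => isCoprime_iff_coprime.mpr (hcop hij))
    fun i => (h i).dvd

theorem dvd_prod_div_of_ne (a : ι → ℕ) {i j : ι} (hij : i ≠ j) : a j ∣ (∏ l, a l) / a i := by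
  classical
  rcases eq_or_ne (a i) 0 with hi | hi
  · simp [hi]
  rw [← prod_erase_mul univ a (mem_univ i), Nat.mul_div_cancel _ (pos_of_ne_zero hi)]
  exact dvd_prod_of_mem a (mem_erase.mpr ⟨hij.symm, mem_univ j⟩)

theorem pow_modEq_one_of_totient_dvd {x m e : ℕ} (h : x.Coprime m) (he : φ m ∣ e) :
    x ^ e ≡ 1 [MOD m] := by
  obtain ⟨t, rfl⟩ := he
  simpa [pow_mul] using (ModEq.pow_totient h).pow t

theorem sum_modEq_card_sub_one {f : ι → ℕ} {m : ℕ} (j : ι) (hj : f j ≡ 0 [MOD m])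
    (h : ∀ i, i ≠ j → f i ≡ 1 [MOD m]) : ∑ i, f i ≡ Fintype.card ι - 1 [MOD m] := by
  classical
  rw [← add_sum_erase univ f (mem_univ j)]
  calc f j + ∑ i ∈ univ.erase j, f i ≡ 0 + ∑ _i ∈ univ.erase j, 1 [MOD m] :=
        hj.add (ModEq.sum fun i hi => h i (ne_of_mem_erase hi))
    _ = Fintype.card ι - 1 := by simp [card_erase_of_mem]

theorem sum_pow_totient_prod_div_modEq (a : ι → ℕ) (ha : ∀ i, 0 < a i)
    (hcop : Pairwise (Coprime on a)) (j : ι) :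
    ∑ i, a i ^ φ ((∏ l, a l) / a i) ≡ Fintype.card ι - 1 [MOD a j] := by
  refine sum_modEq_card_sub_one j ?_ fun i hij =>
    pow_modEq_one_of_totient_dvd (hcop hij) (totient_dvd_of_dvd (dvd_prod_div_of_ne a hij))
  have hcofactor : 0 < (∏ l, a l) / a j :=
    Nat.div_pos (le_of_dvd (prod_pos fun i _ => ha i) (dvd_prod_of_mem a (mem_univ j))) (ha j)
  exact modEq_zero_iff_dvd.mpr (dvd_pow_self _ (totient_pos.mpr hcofactor).ne')

theorem sum_pow_totient_prod_div_modEq_prod (a : ι → ℕ) (ha : ∀ i, 0 < a i)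
    (hcop : Pairwise (Coprime on a)) :
    ∑ i, a i ^ φ ((∏ l, a l) / a i) ≡ Fintype.card ι - 1 [MOD ∏ i, a i] :=
  modEq_prod_of_forall_modEq hcop (sum_pow_totient_prod_div_modEq a ha hcop)

end Nat

theorem stmt_9_general (k : ℕ) (a : Fin k → ℕ) (ha : ∀ i, 0 < a i)
    (hcop : ∀ i j, i ≠ j → Nat.Coprime (a i) (a j)) (n : ℕ)
    (hn : n = ∏ i, a i) :
    ∑ i, a i ^ (n / a i).totient ≡ k - 1 [MOD n] := by
  subst hn
  simpa using Nat.sum_pow_totient_prod_div_modEq_prod a ha fun i j => hcop i j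

/-- Da Silva's generalization of Euler's theorem: if `n = a 1 ⋯ a k` with the
`a i` pairwise coprime (`k ≥ 2`), then
`∑ i, (a i)^{φ(n / a i)} ≡ k - 1 (mod n)`. -/
theorem stmt_9 (k : ℕ) (hk : 2 ≤ k) (a : Fin k → ℕ) (ha : ∀ i, 0 < a i)
    (hcop : ∀ i j, i ≠ j → Nat.Coprime (a i) (a j)) (n : ℕ)
    (hn : n = ∏ i, a i) :
    ∑ i, a i ^ (n / a i).totient ≡ k - 1 [MOD n] :=
  stmt_9_general k a ha hcop n hn
end

section
/- Let a and b be coprime positive integers greater than 1. Then x = a^{φ(b)−1} and y = b^{φ(a)−1} satisfy a·x + b·y ≡ 1 (mod ab). -/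
/-- Explicit solution of the congruence version of Bézout's identity:
for coprime `a, b > 1`, `x = a^{φ(b)-1}` and `y = b^{φ(a)-1}` satisfy
`a·x + b·y ≡ 1 (mod ab)`. -/
theorem stmt_11 (a b : ℕ) (ha : 1 < a) (hb : 1 < b) (h : Nat.Coprime a b) :
    a * a ^ (b.totient - 1) + b * b ^ (a.totient - 1) ≡ 1 [MOD a * b] := by
  have hta : 1 ≤ a.totient := Nat.totient_pos.2 (by omega)
  have htb : 1 ≤ b.totient := Nat.totient_pos.2 (by omega)
  have e1 : a * a ^ (b.totient - 1) = a ^ b.totient := by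
    rw [← pow_succ']; congr 1; omega
  have e2 : b * b ^ (a.totient - 1) = b ^ a.totient := by
    rw [← pow_succ']; congr 1; omega
  rw [e1, e2]
  have hma : a ^ b.totient + b ^ a.totient ≡ 1 [MOD a] := by
    calc a ^ b.totient + b ^ a.totient
        ≡ 0 + 1 [MOD a] := Nat.ModEq.add
          ((Nat.modEq_zero_iff_dvd.2 (dvd_pow_self a (by omega))))
          (Nat.ModEq.pow_totient h.symm)
      _ = 1 := by ring
  have hmb : a ^ b.totient + b ^ a.totient ≡ 1 [MOD b] := by
    calc a ^ b.totient + b ^ a.totient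
        ≡ 1 + 0 [MOD b] := Nat.ModEq.add
          (Nat.ModEq.pow_totient h)
          ((Nat.modEq_zero_iff_dvd.2 (dvd_pow_self b (by omega))))
      _ = 1 := by ring
  exact (Nat.modEq_and_modEq_iff_modEq_mul h).1 ⟨hma, hmb⟩
end
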